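/- arXiv:1510.01439 — 4 statements merged into one kernel-verified Lean document; each statement's English description precedes it below -/
import Mathlib

section
/- For any binary-input discrete memoryless channel W with input alphabet {0,1} and output alphabet Y, the symmetric capacity satisfies I(W) ≥ log₂(2/(1+Z(W))), where Z(W) = Σ_{y∈Y} √(W(y|0)W(y|1)) is the Bhattacharyya parameter. -/
/-- Symmetric capacity of a binary-input channel `W` with finite output alphabet `Y`,
given by conditional pmfs `W y x` (probability of output `y` given input `x`). -/
noncomputable def symCap {Y : Type*} [Fintype Y] (W : Y → Bool → ℝ) : ℝ :=
  ∑ y : Y, ∑ x : Bool,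
    (1/2) * W y x * Real.logb 2 (W y x / ((1/2) * W y false + (1/2) * W y true))

/-- Bhattacharyya parameter `Z(W) = ∑_y √(W(y|0) W(y|1))`. -/
noncomputable def bhatt {Y : Type*} [Fintype Y] (W : Y → Bool → ℝ) : ℝ :=
  ∑ y : Y, Real.sqrt (W y false * W y true)

/-!
With a uniform input, `I(W)` is the Kullback–Leibler divergence between the joint law of
(output, input) and the product of its marginals. Jensen's inequality for the concave logarithm,
applied to `√(r/p)`, bounds any divergence `D(p‖r)` below by `-2 log ∑ √(p r)` (the Rényi
divergence of order 1/2). Grouping the terms by output `y`, Cauchy–Schwarz bounds this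
Bhattacharyya coefficient by `√((1 + Z(W)) / 2)`, and `-2 log √((1 + Z) / 2) = log (2 / (1 + Z))`.
-/

open Finset Real

section Divergence

variable {ι : Type*} {s : Finset ι} {p r : ι → ℝ}

theorem sum_sqrt_mul_pos (hp1 : ∑ i ∈ s, p i = 1)
    (hr : ∀ i ∈ s, 0 < p i → 0 < r i) : 0 < ∑ i ∈ s, √(p i * r i) := by
  obtain ⟨i, hi, hpi⟩ : ∃ i ∈ s, 0 < p i := by
    by_contra! h
    linarith [sum_nonpos h]
  exact sum_pos' (fun i _ ↦ sqrt_nonneg _) ⟨i, hi, sqrt_pos.2 (mul_pos hpi (hr i hi hpi))⟩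

theorem neg_two_mul_log_sum_sqrt_mul_le_sum_mul_log_div (hp : ∀ i ∈ s, 0 ≤ p i)
    (hp1 : ∑ i ∈ s, p i = 1) (hr : ∀ i ∈ s, 0 < p i → 0 < r i) :
    -2 * log (∑ i ∈ s, √(p i * r i)) ≤ ∑ i ∈ s, p i * log (p i / r i) := by
  classical
  set t := s.filter (fun i ↦ 0 < p i)
  have sum_support {f : ι → ℝ} (hf : ∀ i ∈ s, p i = 0 → f i = 0) :
      ∑ i ∈ t, f i = ∑ i ∈ s, f i :=
    sum_filter_of_ne fun i hi hfi ↦ (hp i hi).lt_of_ne' fun h ↦ hfi (hf i hi h)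
  have pos_of_mem {i} (hi : i ∈ t) : 0 < p i ∧ 0 < r i := by
    obtain ⟨hs, hpi⟩ := mem_filter.1 hi
    exact ⟨hpi, hr i hs hpi⟩
  have jensen : ∑ i ∈ t, p i * log √(r i / p i) ≤ log (∑ i ∈ t, p i * √(r i / p i)) := by
    simpa only [smul_eq_mul] using strictConcaveOn_log_Ioi.concaveOn.le_map_sum
      (fun i hi ↦ (pos_of_mem hi).1.le) (by rw [sum_support fun i _ h ↦ h, hp1])
      (fun i hi ↦ sqrt_pos.2 (div_pos (pos_of_mem hi).2 (pos_of_mem hi).1))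
  have log_term {i} (hi : i ∈ t) : p i * log (p i / r i) = -2 * (p i * log √(r i / p i)) := by
    obtain ⟨hpi, hri⟩ := pos_of_mem hi
    rw [log_sqrt (div_pos hri hpi).le, ← inv_div, log_inv]
    ring
  have sqrt_term {i} (hi : i ∈ t) : p i * √(r i / p i) = √(p i * r i) := by
    obtain ⟨hpi, -⟩ := pos_of_mem hi
    rw [← sqrt_sq hpi.le, ← sqrt_mul (sq_nonneg _), sqrt_sq hpi.le]
    congr 1
    field_simp
  rw [← sum_support fun i _ h ↦ by simp [h], ← sum_support fun i _ h ↦ by simp [h],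
    sum_congr rfl fun i hi ↦ log_term hi, ← mul_sum, ← sum_congr rfl fun i hi ↦ sqrt_term hi]
  linarith

end Divergence

section Channel

variable {Y : Type*} (W : Y → Bool → ℝ)

noncomputable def outputPmf (y : Y) : ℝ := (1/2) * W y false + (1/2) * W y true

noncomputable def jointPmf (yx : Y × Bool) : ℝ := (1/2) * W yx.1 yx.2

noncomputable def productPmf (yx : Y × Bool) : ℝ := (1/2) * outputPmf W yx.1

variable {W}

theorem jointPmf_nonneg (hW : ∀ y x, 0 ≤ W y x) (yx : Y × Bool) : 0 ≤ jointPmf W yx := by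
  unfold jointPmf
  have := hW yx.1 yx.2
  positivity

theorem outputPmf_nonneg (hW : ∀ y x, 0 ≤ W y x) (y : Y) : 0 ≤ outputPmf W y := by
  unfold outputPmf
  have := hW y false
  have := hW y true
  positivity

theorem productPmf_pos_of_jointPmf_pos (hW : ∀ y x, 0 ≤ W y x) {yx : Y × Bool}
    (h : 0 < jointPmf W yx) : 0 < productPmf W yx := by
  obtain ⟨y, x⟩ := yx
  have h0 := hW y false
  have h1 := hW y true
  cases x <;> simp only [jointPmf, productPmf, outputPmf] at h ⊢ <;> linarith

variable [Fintype Y]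

theorem sum_outputPmf (hW : ∀ x, ∑ y, W y x = 1) : ∑ y, outputPmf W y = 1 := by
  simp only [outputPmf, sum_add_distrib, ← mul_sum, hW]
  norm_num

theorem sum_jointPmf (hW : ∀ x, ∑ y, W y x = 1) : ∑ yx, jointPmf W yx = 1 := by
  rw [Fintype.sum_prod_type]
  simpa only [jointPmf, Fintype.sum_bool, outputPmf, add_comm] using sum_outputPmf hW

theorem symCap_eq_sum_jointPmf_mul_log_div :
    symCap W = (∑ yx, jointPmf W yx * log (jointPmf W yx / productPmf W yx)) / log 2 := by
  rw [symCap, ← Fintype.sum_prod_type', sum_div]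
  refine sum_congr rfl fun yx _ ↦ ?_
  rw [jointPmf, productPmf, mul_div_mul_left _ _ (by norm_num), logb, outputPmf, mul_div_assoc]

theorem sum_sqrt_jointPmf_mul_productPmf_le (hW : ∀ y x, 0 ≤ W y x)
    (hsum : ∀ x, ∑ y, W y x = 1) :
    ∑ yx, √(jointPmf W yx * productPmf W yx) ≤ √((1 + bhatt W) / 2) := by
  set g : Y → ℝ := fun y ↦ ((√(W y false) + √(W y true)) / 2) ^ 2
  have term (y : Y) (x : Bool) : √(jointPmf W (y, x) * productPmf W (y, x))
      = √(outputPmf W y) * (√(W y x) / 2) := by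
    rw [← sqrt_sq (by positivity : 0 ≤ √(W y x) / 2), ← sqrt_mul (outputPmf_nonneg hW y)]
    congr 1
    rw [div_pow, sq_sqrt (hW y x), jointPmf, productPmf]
    ring
  have sum_g : ∑ y, g y = (1 + bhatt W) / 2 := by
    have (y : Y) : g y = (W y false + W y true + 2 * √(W y false * W y true)) / 4 := by
      rw [sqrt_mul (hW y false)]
      linear_combination (1 / 4) * (sq_sqrt (hW y false) + sq_sqrt (hW y true))
    simp only [this, ← sum_div, sum_add_distrib, ← mul_sum, hsum, bhatt]
    ring
  calc ∑ yx, √(jointPmf W yx * productPmf W yx)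
      = ∑ y, √(outputPmf W y) * √(g y) := by
        rw [Fintype.sum_prod_type]
        refine sum_congr rfl fun y _ ↦ ?_
        rw [Fintype.sum_bool, term, term, sqrt_sq (by positivity)]
        ring
    _ ≤ √(∑ y, outputPmf W y) * √(∑ y, g y) :=
        sum_sqrt_mul_sqrt_le _ (outputPmf_nonneg hW) fun y ↦ sq_nonneg _
    _ = √((1 + bhatt W) / 2) := by rw [sum_outputPmf hsum, sum_g, sqrt_one, one_mul]

end Channel

/-- `I(W) ≥ log₂ (2 / (1 + Z(W)))`. -/
theorem symCap_ge_logb_two_div_one_add_bhatt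
    {Y : Type*} [Fintype Y] (W : Y → Bool → ℝ)
    (hnonneg : ∀ y x, 0 ≤ W y x)
    (hsum : ∀ x : Bool, ∑ y : Y, W y x = 1) :
    Real.logb 2 (2 / (1 + bhatt W)) ≤ symCap W := by
  have hp (yx) (_ : yx ∈ univ) := jointPmf_nonneg hnonneg yx
  have hr (yx) (_ : yx ∈ univ) := productPmf_pos_of_jointPmf_pos hnonneg (yx := yx)
  have hZ : 0 ≤ bhatt W := sum_nonneg fun _ _ ↦ sqrt_nonneg _
  rw [symCap_eq_sum_jointPmf_mul_log_div, logb, div_le_div_iff_of_pos_right (log_pos one_lt_two)]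
  calc log (2 / (1 + bhatt W)) = -2 * log √((1 + bhatt W) / 2) := by
        rw [log_sqrt (by positivity), ← inv_div, log_inv]
        ring
    _ ≤ -2 * log (∑ yx, √(jointPmf W yx * productPmf W yx)) :=
        mul_le_mul_of_nonpos_left (log_le_log (sum_sqrt_mul_pos (sum_jointPmf hsum) hr)
          (sum_sqrt_jointPmf_mul_productPmf_le hnonneg hsum)) (by norm_num)
    _ ≤ _ := neg_two_mul_log_sum_sqrt_mul_le_sum_mul_log_div hp (sum_jointPmf hsum) hr
end

section
/- For any binary-input discrete memoryless channel W, the symmetric capacity satisfies I(W) ≤ √(1 − Z(W)²), where Z(W) is the Bhattacharyya parameter. -/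
/-!
Writing `t = p / (p + q)` for the two transition probabilities `p, q` of an output symbol, its
contribution to `I(W)` is `(p + q) / 2 * (1 - h₂(t))`; concavity of the binary entropy `h₂`
between `0`, `1/2` and `1` bounds this by `|p - q| / 2`, so `I(W)` is at most the total variation
distance `T = ∑ |p - q| / 2`. Factoring `p - q = (√p - √q)(√p + √q)`, Cauchy–Schwarz gives
`(2T)² ≤ (2 - 2Z)(2 + 2Z)`.
-/

open Real Finset

lemma two_mul_mul_log_two_le_binEntropy {t : ℝ} (ht₀ : 0 ≤ t) (ht : t ≤ 2⁻¹) :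
    2 * t * log 2 ≤ binEntropy t := by
  have h := strictConcave_binEntropy.concaveOn.2 (by norm_num : (0 : ℝ) ∈ Set.Icc 0 1)
    (by norm_num : (2⁻¹ : ℝ) ∈ Set.Icc 0 1) (by linarith : 0 ≤ 1 - 2 * t)
    (by linarith : 0 ≤ 2 * t) (by ring)
  simpa [show 2 * t * 2⁻¹ = t by ring] using h

lemma log_two_sub_binEntropy_le {t : ℝ} (ht₀ : 0 ≤ t) (ht₁ : t ≤ 1) :
    log 2 - binEntropy t ≤ |2 * t - 1| * log 2 := by
  rcases le_total t 2⁻¹ with ht | ht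
  · have := two_mul_mul_log_two_le_binEntropy ht₀ ht
    rw [abs_of_nonpos (by linarith)]
    linarith
  · have := two_mul_mul_log_two_le_binEntropy (t := 1 - t) (by linarith) (by linarith)
    rw [binEntropy_one_sub] at this
    rw [abs_of_nonneg (by linarith)]
    linarith

lemma mul_log_two_mul (a : ℝ) : a * log (2 * a) = a * log 2 + a * log a := by
  rcases eq_or_ne a 0 with rfl | ha
  · simp
  · rw [log_mul two_ne_zero ha, mul_add]

lemma mul_log_two_mul_add_one_sub_mul_log_two_mul_one_sub (t : ℝ) :
    t * log (2 * t) + (1 - t) * log (2 * (1 - t)) = log 2 - binEntropy t := by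
  rw [mul_log_two_mul, mul_log_two_mul, binEntropy, log_inv, log_inv]
  ring

lemma half_mul_logb_div_add_half_mul_logb_div_le {p q : ℝ} (hp : 0 ≤ p) (hq : 0 ≤ q) :
    1 / 2 * p * logb 2 (p / (1 / 2 * p + 1 / 2 * q))
      + 1 / 2 * q * logb 2 (q / (1 / 2 * p + 1 / 2 * q)) ≤ |p - q| / 2 := by
  obtain hpq | hpq := (add_nonneg hp hq).eq_or_lt
  · obtain ⟨rfl, rfl⟩ : p = 0 ∧ q = 0 := ⟨by linarith, by linarith⟩
    simp
  obtain ⟨s, t, hs, ht₀, ht₁, rfl, rfl⟩ :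
      ∃ s t : ℝ, 0 < s ∧ 0 ≤ t ∧ t ≤ 1 ∧ p = s * t ∧ q = s * (1 - t) :=
    ⟨p + q, p / (p + q), hpq, by positivity, div_le_one_of_le₀ (by linarith) hpq.le,
      by field_simp, by field_simp; ring⟩
  have hmid : 1 / 2 * (s * t) + 1 / 2 * (s * (1 - t)) = s / 2 := by ring
  have hlog2 : 0 < log 2 := log_pos one_lt_two
  calc 1 / 2 * (s * t) * logb 2 (s * t / (1 / 2 * (s * t) + 1 / 2 * (s * (1 - t))))
        + 1 / 2 * (s * (1 - t)) * logb 2 (s * (1 - t) / (1 / 2 * (s * t) + 1 / 2 * (s * (1 - t))))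
      = s / 2 * (t * log (2 * t) + (1 - t) * log (2 * (1 - t))) / log 2 := by
        rw [hmid, show s * t / (s / 2) = 2 * t by field_simp,
          show s * (1 - t) / (s / 2) = 2 * (1 - t) by field_simp, logb, logb]
        ring
    _ = s / 2 * (log 2 - binEntropy t) / log 2 := by
        rw [mul_log_two_mul_add_one_sub_mul_log_two_mul_one_sub]
    _ ≤ s / 2 * (|2 * t - 1| * log 2) / log 2 := by
        gcongr
        exact log_two_sub_binEntropy_le ht₀ ht₁
    _ = |s * t - s * (1 - t)| / 2 := by
        rw [show s * t - s * (1 - t) = s * (2 * t - 1) by ring, abs_mul, abs_of_pos hs]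
        field_simp

lemma symCap_le_half_sum_abs_sub {Y : Type*} [Fintype Y] (W : Y → Bool → ℝ)
    (hW : ∀ y x, 0 ≤ W y x) : symCap W ≤ (∑ y, |W y false - W y true|) / 2 := by
  rw [symCap, sum_div]
  refine sum_le_sum fun y _ => ?_
  rw [Fintype.sum_bool, add_comm]
  exact half_mul_logb_div_add_half_mul_logb_div_le (hW y false) (hW y true)

lemma sq_sum_abs_sub_le {ι : Type*} (s : Finset ι) {p q : ι → ℝ} (hp : ∀ i, 0 ≤ p i)
    (hq : ∀ i, 0 ≤ q i) :
    (∑ i ∈ s, |p i - q i|) ^ 2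
      ≤ (∑ i ∈ s, p i + ∑ i ∈ s, q i) ^ 2 - 4 * (∑ i ∈ s, √(p i * q i)) ^ 2 := by
  have hsub (i : ι) : (√(p i) - √(q i)) ^ 2 = p i + q i - 2 * √(p i * q i) := by
    rw [sub_sq, sq_sqrt (hp i), sq_sqrt (hq i), sqrt_mul (hp i)]
    ring
  have hadd (i : ι) : (√(p i) + √(q i)) ^ 2 = p i + q i + 2 * √(p i * q i) := by
    rw [add_sq, sq_sqrt (hp i), sq_sqrt (hq i), sqrt_mul (hp i)]
    ring
  have hfactor (i : ι) : |p i - q i| ^ 2 = (√(p i) - √(q i)) ^ 2 * (√(p i) + √(q i)) ^ 2 := by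
    rw [sq_abs, ← mul_pow, mul_comm, ← sq_sub_sq, sq_sqrt (hp i), sq_sqrt (hq i)]
  calc (∑ i ∈ s, |p i - q i|) ^ 2
      ≤ (∑ i ∈ s, (√(p i) - √(q i)) ^ 2) * ∑ i ∈ s, (√(p i) + √(q i)) ^ 2 :=
        sum_sq_le_sum_mul_sum_of_sq_le_mul s (fun _ _ => sq_nonneg _) (fun _ _ => sq_nonneg _)
          fun i _ => (hfactor i).le
    _ = (∑ i ∈ s, p i + ∑ i ∈ s, q i) ^ 2 - 4 * (∑ i ∈ s, √(p i * q i)) ^ 2 := by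
        simp only [hsub, hadd, sum_add_distrib, sum_sub_distrib, ← mul_sum]
        ring

/-- `I(W) ≤ √(1 − Z(W)²)`. -/
theorem symCap_le_sqrt_one_sub_bhatt_sq
    {Y : Type*} [Fintype Y] (W : Y → Bool → ℝ)
    (hnonneg : ∀ y x, 0 ≤ W y x)
    (hsum : ∀ x : Bool, ∑ y : Y, W y x = 1) :
    symCap W ≤ Real.sqrt (1 - bhatt W ^ 2) := by
  have htv := sq_sum_abs_sub_le univ (hnonneg · false) (hnonneg · true)
  rw [hsum false, hsum true, ← bhatt] at htv
  calc symCap W ≤ (∑ y, |W y false - W y true|) / 2 := symCap_le_half_sum_abs_sub W hnonneg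
    _ ≤ √(1 - bhatt W ^ 2) := by
        apply le_sqrt_of_sq_le
        linarith
end

section
/- For the BEC polarization martingale (Zₙ) with Z₀ = ε (defined by Zₙ₊₁ = Zₙ² or 2Zₙ−Zₙ² each with probability 1/2), the almost-sure limit Z_∞ exists and takes values in {0,1} almost surely, with P(Z_∞ = 0) = 1 − ε and P(Z_∞ = 1) = ε. -/
/-!
With `R n = ±1` the fair sign of the `n`-th coin, the recursion reads
`Z (n+1) = Z n + R (n+1) * (Z n * (1 - Z n))`. Hence `Z` is a `[0,1]`-valued martingale for the
natural filtration of the independent, centred signs `R`, and it converges almost surely.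
Its steps have size exactly `|Z (n+1) - Z n| = Z n * (1 - Z n)`, which must tend to `0`, so the
limit lies in `{0, 1}`; by dominated convergence its mean is `E[Z 0] = ε`, and the mean of a
`{0,1}`-valued variable is the probability that it equals `1`.
-/

open MeasureTheory ProbabilityTheory Filter Topology Set

section

variable {Ω : Type*} {m0 : MeasurableSpace Ω} {μ : Measure Ω}

theorem martingale_natural_of_sub_eq_mul {R Z W : ℕ → Ω → ℝ}
    (hR : ∀ n, StronglyMeasurable (R n)) (hRindep : iIndepFun R μ)
    (hRint : ∀ n, Integrable (R n) μ) (hRmean : ∀ n, μ[R n] = 0)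
    (hZ : StronglyAdapted (Filtration.natural R hR) Z) (hZint : ∀ n, Integrable (Z n) μ)
    (hW : StronglyAdapted (Filtration.natural R hR) W)
    (hWR : ∀ n, Integrable (W n * R (n + 1)) μ)
    (hinc : ∀ n, Z (n + 1) - Z n = W n * R (n + 1)) :
    Martingale Z (Filtration.natural R hR) μ := by
  have := hRindep.isProbabilityMeasure
  refine martingale_of_condExp_sub_eq_zero_nat hZ hZint fun n => ?_
  rw [hinc]
  filter_upwards [condExp_mul_of_stronglyMeasurable_left (hW n) (hWR n) (hRint (n + 1)),
    hRindep.condExp_natural_ae_eq_of_lt hR n.lt_succ_self] with ω hprod hindep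
  simp [hprod, hindep, hRmean]

theorem Martingale.exists_ae_tendsto_of_abs_le [IsFiniteMeasure μ] {ℱ : Filtration ℕ m0}
    {Z : ℕ → Ω → ℝ} {C : ℝ} (hZ : Martingale Z ℱ μ) (hbdd : ∀ n ω, |Z n ω| ≤ C) :
    ∃ Zlim : Ω → ℝ, Measurable Zlim ∧
      (∀ᵐ ω ∂μ, Tendsto (fun n => Z n ω) atTop (𝓝 (Zlim ω))) ∧ μ[Zlim] = μ[Z 0] := by
  have hL1 : ∀ n, eLpNorm (Z n) 1 μ ≤ (μ univ * ENNReal.ofReal C).toNNReal := fun n => by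
    rw [ENNReal.coe_toNNReal (by finiteness)]
    simpa using eLpNorm_le_of_ae_bound (p := 1) (ae_of_all _ (hbdd n))
  have hlim := hZ.submartingale.ae_tendsto_limitProcess hL1
  refine ⟨ℱ.limitProcess Z μ, Filtration.stronglyMeasurable_limit_process'.measurable, hlim, ?_⟩
  have hconv : Tendsto (fun n => μ[Z n]) atTop (𝓝 μ[ℱ.limitProcess Z μ]) :=
    tendsto_integral_of_dominated_convergence (fun _ => C)
      (fun n => ((hZ.stronglyAdapted n).mono (ℱ.le n)).aestronglyMeasurable)
      (integrable_const C) (fun n => ae_of_all _ (hbdd n)) hlim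
  have hconst : ∀ n, μ[Z n] = μ[Z 0] := fun n => by
    simpa using (hZ.setIntegral_eq (Nat.zero_le n) MeasurableSet.univ).symm
  simp only [hconst] at hconv
  exact tendsto_nhds_unique hconv tendsto_const_nhds

end

theorem eq_zero_or_eq_one_of_tendsto_of_abs_sub_eq {z : ℕ → ℝ} {L : ℝ}
    (hz : Tendsto z atTop (𝓝 L)) (hstep : ∀ n, |z (n + 1) - z n| = z n * (1 - z n)) :
    L = 0 ∨ L = 1 := by
  have hsteps : Tendsto (fun n => |z (n + 1) - z n|) atTop (𝓝 |L - L|) :=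
    ((hz.comp (tendsto_add_atTop_nat 1)).sub hz).abs
  simp only [hstep, sub_self, abs_zero] at hsteps
  have hL : L * (1 - L) = 0 :=
    tendsto_nhds_unique (hz.mul (tendsto_const_nhds.sub hz)) hsteps
  rcases mul_eq_zero.mp hL with h | h
  · exact .inl h
  · exact .inr (by linarith)

section

variable {Ω : Type*} {m0 : MeasurableSpace Ω} {μ : Measure Ω} [IsProbabilityMeasure μ]
  {f : Ω → ℝ}

theorem measure_eq_one_eq_ofReal_integral (hf : Measurable f)
    (h01 : ∀ᵐ ω ∂μ, f ω = 0 ∨ f ω = 1) : μ {ω | f ω = 1} = ENNReal.ofReal μ[f] := by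
  have hind : f =ᵐ[μ] {ω | f ω = 1}.indicator 1 := by
    filter_upwards [h01] with ω hω
    rcases hω with h | h <;> simp [indicator, h]
  have hmeas : MeasurableSet {ω | f ω = 1} := hf (measurableSet_singleton 1)
  rw [integral_congr_ae hind, integral_indicator_one hmeas, ofReal_measureReal]

theorem measure_eq_zero_eq_ofReal_one_sub_integral (hf : Measurable f)
    (h01 : ∀ᵐ ω ∂μ, f ω = 0 ∨ f ω = 1) :
    μ {ω | f ω = 0} = ENNReal.ofReal (1 - μ[f]) := by
  have hcompl : {ω | f ω = 0} =ᵐ[μ] ({ω | f ω = 1}ᶜ : Set Ω) := by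
    filter_upwards [h01] with ω hω
    change (f ω = 0) = ¬(f ω = 1)
    rcases hω with h | h <;> simp [h]
  have hmeas : MeasurableSet {ω | f ω = 1} := hf (measurableSet_singleton 1)
  have hmean : 0 ≤ μ[f] :=
    integral_nonneg_of_ae (h01.mono fun ω hω => by rcases hω with h | h <;> simp [h])
  rw [measure_congr hcompl, prob_compl_eq_one_sub hmeas,
    measure_eq_one_eq_ofReal_integral hf h01, ENNReal.ofReal_sub 1 hmean, ENNReal.ofReal_one]

end

theorem add_mul_mul_one_sub_mem_Icc {z s : ℝ} (hz : z ∈ Icc 0 1) (hs : |s| ≤ 1) :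
    z + s * (z * (1 - z)) ∈ Icc 0 1 := by
  obtain ⟨hz0, hz1⟩ := hz
  obtain ⟨hs0, hs1⟩ := abs_le.mp hs
  have hw : 0 ≤ z * (1 - z) := mul_nonneg hz0 (by linarith)
  constructor <;> nlinarith

theorem abs_add_mul_mul_one_sub_sub_self {z s : ℝ} (hz : z ∈ Icc 0 1) (hs : |s| = 1) :
    |z + s * (z * (1 - z)) - z| = z * (1 - z) := by
  rw [add_sub_cancel_left, abs_mul, hs, one_mul,
    abs_of_nonneg (mul_nonneg hz.1 (sub_nonneg.mpr hz.2))]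

def coinSign (b : Bool) : ℝ := if b then -1 else 1

theorem abs_coinSign (b : Bool) : |coinSign b| = 1 := by
  cases b <;> simp [coinSign]

theorem ite_sq_eq_add_coinSign_mul (b : Bool) (z : ℝ) :
    (if b = true then z ^ 2 else 2 * z - z ^ 2) = z + coinSign b * (z * (1 - z)) := by
  cases b <;> simp only [coinSign] <;> norm_num <;> ring

theorem integral_coinSign_eq_zero {Ω : Type*} {m0 : MeasurableSpace Ω} {μ : Measure Ω}
    [IsProbabilityMeasure μ] {X : Ω → Bool} (hX : Measurable X)
    (hfair : μ (X ⁻¹' {true}) = 1 / 2) : ∫ ω, coinSign (X ω) ∂μ = 0 := by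
  rw [← integral_map hX.aemeasurable (measurable_of_finite _).aestronglyMeasurable,
    integral_fintype .of_finite]
  have hfalse : X ⁻¹' {false} = (X ⁻¹' {true})ᶜ := by ext; simp
  simp [Measure.real, Measure.map_apply hX, hfalse, hfair, coinSign,
    prob_compl_eq_one_sub (hX (measurableSet_singleton true))]

section

variable {Ω : Type*} {m0 : MeasurableSpace Ω} {μ : Measure Ω} {R Z : ℕ → Ω → ℝ} {c : ℝ}

theorem polarization_mem_Icc (hR : ∀ n ω, |R n ω| ≤ 1) (hc : c ∈ Icc 0 1)
    (hZ0 : ∀ ω, Z 0 ω = c)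
    (hstep : ∀ n ω, Z (n + 1) ω = Z n ω + R (n + 1) ω * (Z n ω * (1 - Z n ω))) :
    ∀ n ω, Z n ω ∈ Icc 0 1
  | 0, ω => hZ0 ω ▸ hc
  | n + 1, ω => hstep n ω ▸
      add_mul_mul_one_sub_mem_Icc (polarization_mem_Icc hR hc hZ0 hstep n ω) (hR (n + 1) ω)

theorem polarization_stronglyAdapted_natural (hR : ∀ n, StronglyMeasurable (R n))
    (hZ0 : ∀ ω, Z 0 ω = c)
    (hstep : ∀ n ω, Z (n + 1) ω = Z n ω + R (n + 1) ω * (Z n ω * (1 - Z n ω))) :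
    StronglyAdapted (Filtration.natural R hR) Z := by
  intro n
  induction n with
  | zero => simpa only [show Z 0 = fun _ => c from funext hZ0] using stronglyMeasurable_const
  | succ n ih =>
    have hZn := ih.mono ((Filtration.natural R hR).mono n.le_succ)
    rw [show Z (n + 1) = _ from funext (hstep n)]
    exact hZn.add ((Filtration.stronglyAdapted_natural hR (n + 1)).mul
      (hZn.mul (stronglyMeasurable_const.sub hZn)))

theorem polarization_martingale (hR : ∀ n, StronglyMeasurable (R n))
    (hRindep : iIndepFun R μ) (hRbdd : ∀ n ω, |R n ω| ≤ 1) (hRmean : ∀ n, μ[R n] = 0)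
    (hc : c ∈ Icc 0 1) (hZ0 : ∀ ω, Z 0 ω = c)
    (hstep : ∀ n ω, Z (n + 1) ω = Z n ω + R (n + 1) ω * (Z n ω * (1 - Z n ω))) :
    Martingale Z (Filtration.natural R hR) μ := by
  have := hRindep.isProbabilityMeasure
  set ℱ := Filtration.natural R hR
  have hZ : StronglyAdapted ℱ Z := polarization_stronglyAdapted_natural hR hZ0 hstep
  have hW : StronglyAdapted ℱ fun n ω => Z n ω * (1 - Z n ω) := fun n =>
    (hZ n).mul (stronglyMeasurable_const.sub (hZ n))
  have hmem := polarization_mem_Icc hRbdd hc hZ0 hstep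
  have hbdd {f : Ω → ℝ} (hf : StronglyMeasurable f) (hfb : ∀ ω, |f ω| ≤ 1) : Integrable f μ :=
    (integrable_const 1).mono' hf.aestronglyMeasurable (ae_of_all _ hfb)
  refine martingale_natural_of_sub_eq_mul hR hRindep (fun n => hbdd (hR n) (hRbdd n)) hRmean
    hZ (fun n => hbdd ((hZ n).mono (ℱ.le n)) fun ω => ?_) hW
    (fun n => hbdd (((hW n).mono (ℱ.le n)).mul (hR (n + 1))) fun ω => ?_) fun n => ?_
  · exact abs_le.mpr ⟨by linarith [(hmem n ω).1], (hmem n ω).2⟩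
  · obtain ⟨hz0, hz1⟩ := hmem n ω
    rw [Pi.mul_apply, abs_mul]
    exact mul_le_one₀ (abs_le.mpr ⟨by nlinarith, by nlinarith⟩) (abs_nonneg _) (hRbdd _ _)
  · ext ω
    simp only [Pi.sub_apply, Pi.mul_apply, hstep]
    ring

end

/-- For the BEC polarization process driven by i.i.d. fair coin flips with `Z₀ = ε`,
the almost-sure limit `Z_∞` exists, takes values in `{0,1}` almost surely, and
satisfies `P(Z_∞ = 1) = ε` and `P(Z_∞ = 0) = 1 − ε`. -/
theorem polarization_process_limit
    {Ω : Type*} [m0 : MeasurableSpace Ω] (μ : Measure Ω) [IsProbabilityMeasure μ]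
    (B : ℕ → Ω → Bool) (hBmeas : ∀ n, Measurable (B n))
    (hBindep : iIndepFun B μ)
    (hBfair : ∀ n, μ (B n ⁻¹' {true}) = 1/2)
    (ε : ℝ) (hε : ε ∈ Set.Icc (0:ℝ) 1)
    (Z : ℕ → Ω → ℝ)
    (hZ0 : ∀ ω, Z 0 ω = ε)
    (hZrec : ∀ n ω, Z (n+1) ω =
      if B (n+1) ω = true then (Z n ω) ^ 2 else 2 * Z n ω - (Z n ω) ^ 2) :
    ∃ Zlim : Ω → ℝ,
      (∀ᵐ ω ∂μ, Tendsto (fun n => Z n ω) atTop (nhds (Zlim ω))) ∧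
      (∀ᵐ ω ∂μ, Zlim ω = 0 ∨ Zlim ω = 1) ∧
      μ {ω | Zlim ω = 1} = ENNReal.ofReal ε ∧
      μ {ω | Zlim ω = 0} = ENNReal.ofReal (1 - ε) := by
  set R : ℕ → Ω → ℝ := fun n => coinSign ∘ B n
  have hR : ∀ n, StronglyMeasurable (R n) := fun n =>
    ((measurable_of_finite coinSign).comp (hBmeas n)).stronglyMeasurable
  have hRabs : ∀ n ω, |R n ω| = 1 := fun n ω => abs_coinSign _
  have hstep : ∀ n ω, Z (n + 1) ω = Z n ω + R (n + 1) ω * (Z n ω * (1 - Z n ω)) :=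
    fun n ω => (hZrec n ω).trans (ite_sq_eq_add_coinSign_mul _ _)
  have hmem := polarization_mem_Icc (fun n ω => (hRabs n ω).le) hε hZ0 hstep
  have hmart : Martingale Z (Filtration.natural R hR) μ :=
    polarization_martingale hR (hBindep.comp _ fun _ => measurable_of_finite coinSign)
      (fun n ω => (hRabs n ω).le) (fun n => integral_coinSign_eq_zero (hBmeas n) (hBfair n))
      hε hZ0 hstep
  obtain ⟨Zlim, hmeas, hlim, hmean⟩ := Martingale.exists_ae_tendsto_of_abs_le (C := 1) hmart
    fun n ω => abs_le.mpr ⟨by linarith [(hmem n ω).1], (hmem n ω).2⟩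
  have h01 : ∀ᵐ ω ∂μ, Zlim ω = 0 ∨ Zlim ω = 1 := by
    filter_upwards [hlim] with ω hω
    exact eq_zero_or_eq_one_of_tendsto_of_abs_sub_eq hω fun n => by
      rw [hstep]; exact abs_add_mul_mul_one_sub_sub_self (hmem n ω) (hRabs _ _)
  have hmean_eq : μ[Zlim] = ε := by simp [hmean, hZ0]
  exact ⟨Zlim, hlim, h01, hmean_eq ▸ measure_eq_one_eq_ofReal_integral hmeas h01,
    hmean_eq ▸ measure_eq_zero_eq_ofReal_one_sub_integral hmeas h01⟩
end

section
/- Margulis–Russo lemma: Let Ω ⊆ {0,1}^N be a monotone (upward-closed) set and μ_p the product Bernoulli(p) measure on {0,1}^N. Then d/dp μ_p(Ω) = Σ_{j=1}^N I_j^{(p)}(Ω), where I_j^{(p)}(Ω) = μ_p({x : 1_Ω(x) ≠ 1_Ω(x^{(j)})}) is the influence of coordinate j and x^{(j)} is x with the j-th bit flipped. -/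
/-!
Differentiating the product `μ_p({x}) = ∏_k (p or 1 - p)` coordinatewise, the `j`-th part of
`d/dp μ_p(Ω)` is `∑_{x ∈ Ω} ±∏_{k ≠ j} (p or 1 - p)`, the sign being `+` iff `x j = 1`.
The points `x` and `x^{(j)}` share the factor `∏_{k ≠ j}`, so both this sum and `I_j^{(p)}(Ω)`
can be evaluated pair by pair. In the derivative a pair contributes `∏_{k ≠ j}` times the jump of
`1_Ω` from its lower to its upper point, which by monotonicity is `1` if the pair is pivotal and
`0` otherwise; in the influence a pivotal pair contributes `(p + (1 - p)) ∏_{k ≠ j}`.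
-/

open Finset

/-- The `μ_p`-weight of a point `x ∈ {0,1}^N` under the product Bernoulli(p) measure. -/
noncomputable def bernWeight {N : ℕ} (p : ℝ) (x : Fin N → Bool) : ℝ :=
  ∏ j : Fin N, (if x j then p else 1 - p)

open Function

def spin (b : Bool) : ℝ :=
  if b then 1 else -1

@[simp]
lemma spin_not (b : Bool) : spin (!b) = -spin b := by
  cases b <;> simp [spin]

section BitFlip

variable {ι : Type*} [DecidableEq ι]

def bitFlip (j : ι) (x : ι → Bool) : ι → Bool :=
  update x j (!x j)

@[simp]
lemma bitFlip_apply_self (j : ι) (x : ι → Bool) : bitFlip j x j = !x j :=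
  update_self ..

lemma bitFlip_apply_of_ne {j k : ι} (h : k ≠ j) (x : ι → Bool) : bitFlip j x k = x k :=
  update_of_ne h ..

lemma bitFlip_involutive (j : ι) : Involutive (bitFlip j) := by
  intro x
  ext k
  by_cases h : k = j
  · subst h
    simp
  · simp only [bitFlip_apply_of_ne h]

lemma bitFlip_le {j : ι} {x : ι → Bool} (hx : x j = true) : bitFlip j x ≤ x :=
  update_le_self_iff.2 (by simp [hx])

lemma le_bitFlip {j : ι} {x : ι → Bool} (hx : x j = false) : x ≤ bitFlip j x :=
  le_update_self_iff.2 (by simp [hx])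

variable [Fintype ι]

def pivotalIndicator (Ω : Finset (ι → Bool)) (j : ι) (x : ι → Bool) : ℝ :=
  if (x ∈ Ω ↔ bitFlip j x ∈ Ω) then 0 else 1

lemma pivotalIndicator_bitFlip (Ω : Finset (ι → Bool)) (j : ι) (x : ι → Bool) :
    pivotalIndicator Ω j (bitFlip j x) = pivotalIndicator Ω j x := by
  simp only [pivotalIndicator, bitFlip_involutive j x, Iff.comm]

lemma spin_mul_sub_indicator_bitFlip {Ω : Finset (ι → Bool)}
    (hΩ : IsUpperSet (Ω : Set (ι → Bool))) (j : ι) (x : ι → Bool) :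
    spin (x j) * ((if x ∈ Ω then 1 else 0) - (if bitFlip j x ∈ Ω then 1 else 0)) =
      pivotalIndicator Ω j x := by
  unfold pivotalIndicator
  cases hx : x j
  · have : x ∈ Ω → bitFlip j x ∈ Ω := hΩ (le_bitFlip hx)
    by_cases x ∈ Ω <;> by_cases bitFlip j x ∈ Ω <;> simp_all [spin]
  · have : bitFlip j x ∈ Ω → x ∈ Ω := hΩ (bitFlip_le hx)
    by_cases x ∈ Ω <;> by_cases bitFlip j x ∈ Ω <;> simp_all [spin]

end BitFlip

lemma Function.Involutive.two_mul_sum_mul {α R : Type*} [Fintype α] [CommSemiring R]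
    {σ : α → α} (hσ : Involutive σ) (g E : α → R) (hE : ∀ x, E (σ x) = E x) :
    2 * ∑ x, g x * E x = ∑ x, (g x + g (σ x)) * E x := by
  rw [two_mul]
  nth_rewrite 2 [← Equiv.sum_comp (hσ.toPerm σ)]
  simp only [Involutive.coe_toPerm, hE, add_mul, sum_add_distrib]

section Weights

variable {N : ℕ}

noncomputable def bernFactor (p : ℝ) (b : Bool) : ℝ :=
  if b then p else 1 - p

lemma bernFactor_add_bernFactor_not (p : ℝ) (b : Bool) :
    bernFactor p b + bernFactor p (!b) = 1 := by
  cases b <;> simp [bernFactor]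

lemma hasDerivAt_bernFactor (b : Bool) (p : ℝ) :
    HasDerivAt (bernFactor · b) (spin b) p := by
  cases b
  · simpa [bernFactor, spin] using (hasDerivAt_id p).const_sub 1
  · simpa [bernFactor, spin] using hasDerivAt_id' p

noncomputable def bernWeightExcept (p : ℝ) (j : Fin N) (x : Fin N → Bool) : ℝ :=
  ∏ k ∈ univ.erase j, bernFactor p (x k)

lemma bernWeight_eq_mul_bernWeightExcept (p : ℝ) (j : Fin N) (x : Fin N → Bool) :
    bernWeight p x = bernFactor p (x j) * bernWeightExcept p j x :=
  (mul_prod_erase _ (fun k => bernFactor p (x k)) (mem_univ j)).symm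

lemma bernWeightExcept_bitFlip (p : ℝ) (j : Fin N) (x : Fin N → Bool) :
    bernWeightExcept p j (bitFlip j x) = bernWeightExcept p j x :=
  prod_congr rfl fun _ hk => by rw [bitFlip_apply_of_ne (ne_of_mem_erase hk)]

lemma hasDerivAt_bernWeight (x : Fin N → Bool) (p : ℝ) :
    HasDerivAt (bernWeight · x) (∑ j, bernWeightExcept p j x * spin (x j)) p :=
  HasDerivAt.fun_finsetProd fun j _ => hasDerivAt_bernFactor (x j) p

noncomputable def influence (Ω : Finset (Fin N → Bool)) (p : ℝ) (j : Fin N) : ℝ :=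
  ∑ x ∈ univ.filter (fun x => ¬ (x ∈ Ω ↔ bitFlip j x ∈ Ω)), bernWeight p x

lemma two_mul_sum_bernWeightExcept_mul_spin {Ω : Finset (Fin N → Bool)}
    (hΩ : IsUpperSet (Ω : Set (Fin N → Bool))) (p : ℝ) (j : Fin N) :
    2 * ∑ x ∈ Ω, bernWeightExcept p j x * spin (x j) =
      ∑ x, pivotalIndicator Ω j x * bernWeightExcept p j x := by
  set g : (Fin N → Bool) → ℝ := fun x => spin (x j) * (if x ∈ Ω then 1 else 0)
  have hg : ∀ x, g x + g (bitFlip j x) = pivotalIndicator Ω j x := fun x => by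
    rw [← spin_mul_sub_indicator_bitFlip hΩ j x]
    simp only [g, bitFlip_apply_self, spin_not]
    ring
  rw [← Fintype.sum_ite_mem, ← sum_congr rfl fun x _ => congrArg (· * _) (hg x),
    ← (bitFlip_involutive j).two_mul_sum_mul g _ (bernWeightExcept_bitFlip p j)]
  congr 1
  exact sum_congr rfl fun x _ => by simp only [g]; split_ifs <;> ring

lemma two_mul_influence (Ω : Finset (Fin N → Bool)) (p : ℝ) (j : Fin N) :
    2 * influence Ω p j = ∑ x, pivotalIndicator Ω j x * bernWeightExcept p j x := by
  set g : (Fin N → Bool) → ℝ := fun x => pivotalIndicator Ω j x * bernFactor p (x j)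
  have hg : ∀ x, g x + g (bitFlip j x) = pivotalIndicator Ω j x := fun x => by
    rw [← mul_one (pivotalIndicator Ω j x), ← bernFactor_add_bernFactor_not p (x j)]
    simp only [g, pivotalIndicator_bitFlip, bitFlip_apply_self, mul_add]
  rw [influence, sum_filter, ← sum_congr rfl fun x _ => congrArg (· * _) (hg x),
    ← (bitFlip_involutive j).two_mul_sum_mul g _ (bernWeightExcept_bitFlip p j)]
  congr 1
  exact sum_congr rfl fun x _ => by
    rw [bernWeight_eq_mul_bernWeightExcept p j]
    split_ifs <;> simp [g, pivotalIndicator, *]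

theorem sum_bernWeightExcept_mul_spin_eq_influence {Ω : Finset (Fin N → Bool)}
    (hΩ : IsUpperSet (Ω : Set (Fin N → Bool))) (p : ℝ) (j : Fin N) :
    ∑ x ∈ Ω, bernWeightExcept p j x * spin (x j) = influence Ω p j := by
  linarith [two_mul_sum_bernWeightExcept_mul_spin hΩ p j, two_mul_influence Ω p j]

end Weights

/-- Margulis–Russo lemma: for a monotone set `Ω ⊆ {0,1}^N`, the derivative in `p` of
`μ_p(Ω)` equals the total influence `∑_j I_j^{(p)}(Ω)`, where `I_j^{(p)}(Ω)` is the
`μ_p`-measure of the set of points where flipping coordinate `j` changes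
membership in `Ω`. -/
theorem margulis_russo {N : ℕ} (Ω : Finset (Fin N → Bool))
    (hmono : ∀ x y : Fin N → Bool, (∀ j, x j = true → y j = true) → x ∈ Ω → y ∈ Ω)
    (p : ℝ) :
    HasDerivAt (fun q => ∑ x ∈ Ω, bernWeight q x)
      (∑ j : Fin N,
        ∑ x ∈ Finset.univ.filter
          (fun x : Fin N → Bool =>
            ¬ (x ∈ Ω ↔ Function.update x j (!x j) ∈ Ω)),
          bernWeight p x)
      p := by
  have hΩ : IsUpperSet (Ω : Set (Fin N → Bool)) := fun x y hxy hx =>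
    hmono x y (fun j => Bool.le_iff_imp.1 (hxy j)) hx
  refine (HasDerivAt.fun_sum fun x (_ : x ∈ Ω) => hasDerivAt_bernWeight x p).congr_deriv ?_
  rw [sum_comm]
  exact sum_congr rfl fun j _ => sum_bernWeightExcept_mul_spin_eq_influence hΩ p j
end
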